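/- arXiv:1702.05578 — 2 statements merged into one kernel-verified Lean document; each statement's English description precedes it below -/
import Mathlib

section
/- In a normed BPA system, branching bisimilar processes have equal branching norm: if α ≃ β then ‖α‖_b = ‖β‖_b. -/
/-- Silent-step closure (⇒): reflexive transitive closure of τ-transitions. -/
def SilentStar {S A : Type*} (trans : S → A → S → Prop) (tau : A) : S → S → Prop :=
  Relation.ReflTransGen (fun p q => trans p tau q)

/-- A symmetric relation is a branching bisimulation. -/
def IsBranchingBisim {S A : Type*} (trans : S → A → S → Prop) (tau : A)
    (R : S → S → Prop) : Prop :=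
  Symmetric R ∧
  ∀ a b a' (l : A), R a b → trans a l a' →
    (l = tau ∧ R a' b) ∨
    ∃ b'' b', SilentStar trans tau b b'' ∧ trans b'' l b' ∧ R a b'' ∧ R a' b'

/-- A symmetric relation is a weak bisimulation. -/
def IsWeakBisim {S A : Type*} (trans : S → A → S → Prop) (tau : A)
    (R : S → S → Prop) : Prop :=
  Symmetric R ∧
  ∀ a b a' (l : A), R a b → trans a l a' →
    (l = tau ∧ R a' b) ∨
    ∃ g1 g2 b', SilentStar trans tau b g1 ∧ trans g1 l g2 ∧
      SilentStar trans tau g2 b' ∧ R a' b'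

/-- Branching bisimilarity: the union of all branching bisimulations. -/
def BrBisim {S A : Type*} (trans : S → A → S → Prop) (tau : A) (a b : S) : Prop :=
  ∃ R, IsBranchingBisim trans tau R ∧ R a b

/-- Weak bisimilarity: the union of all weak bisimulations. -/
def WkBisim {S A : Type*} (trans : S → A → S → Prop) (tau : A) (a b : S) : Prop :=
  ∃ R, IsWeakBisim trans tau R ∧ R a b

/-- One-step transition of a BPA system: X β →λ α β whenever X →λ α is a rule. -/
def BPA.Trans {V A : Type*} (rules : V → A → List V → Prop)
    (p : List V) (l : A) (q : List V) : Prop :=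
  ∃ X α β, p = X :: β ∧ rules X l α ∧ q = α ++ β

/-- A step by some action. -/
def BPA.Step {V A : Type*} (rules : V → A → List V → Prop) (p q : List V) : Prop :=
  ∃ l, BPA.Trans rules p l q

/-- Reachability in a BPA system. -/
def BPA.Reach {V A : Type*} (rules : V → A → List V → Prop) : List V → List V → Prop :=
  Relation.ReflTransGen (BPA.Step rules)

/-- A BPA system is normed if every variable can reach the empty process ε. -/
def BPA.Normed {V A : Type*} (rules : V → A → List V → Prop) : Prop :=
  ∀ X : V, BPA.Reach rules [X] []

/-- The redundant set Rd(α) = { X | Xα ≃ α }. -/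
def BPA.Rd {V A : Type*} (rules : V → A → List V → Prop) (tau : A) (α : List V) : Set V :=
  {X | BrBisim (BPA.Trans rules) tau (X :: α) α}

/-- γ ⇒_{≃} γ' : silent moves between branching bisimilar processes. -/
def SBStar {S A : Type*} (trans : S → A → S → Prop) (tau : A) (p q : S) : Prop :=
  SilentStar trans tau p q ∧ BrBisim trans tau p q

/-- A state-changing step: a visible action, or a silent step to a
non-branching-bisimilar state. -/
def JStep {S A : Type*} (trans : S → A → S → Prop) (tau : A) (p q : S) : Prop :=
  (∃ a, a ≠ tau ∧ trans p a q) ∨ (trans p tau q ∧ ¬ BrBisim trans tau p q)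

/-- `Cost trans tau p q k` : there is a sequence from `p` to `q` alternating
≃-preserving silent phases and state-changing steps, with exactly `k`
state-changing steps. -/
inductive Cost {S A : Type*} (trans : S → A → S → Prop) (tau : A) : S → S → ℕ → Prop
  | zero {p q : S} : SBStar trans tau p q → Cost trans tau p q 0
  | step {p p' p'' q : S} {k : ℕ} : SBStar trans tau p p' → JStep trans tau p' p'' →
      Cost trans tau p'' q k → Cost trans tau p q (k + 1)

/-- The branching norm of α relative to β: minimal number of state-changing
steps to reduce αβ to β. -/
noncomputable def BPA.bnormRel {V A : Type*} (rules : V → A → List V → Prop) (tau : A)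
    (α β : List V) : ℕ :=
  sInf {k | Cost (BPA.Trans rules) tau (α ++ β) β k}

/-- The branching norm of α. -/
noncomputable def BPA.bnorm {V A : Type*} (rules : V → A → List V → Prop) (tau : A)
    (α : List V) : ℕ :=
  BPA.bnormRel rules tau α []

section AuxEquiv

variable {S A : Type*} (trans : S → A → S → Prop) (tau : A)

/-- Semi-branching bisimulation (Basten). -/
def Semi (R : S → S → Prop) : Prop :=
  Symmetric R ∧
  ∀ a b a' (l : A), R a b → trans a l a' →
    (l = tau ∧ ∃ b', SilentStar trans tau b b' ∧ R a b' ∧ R a' b') ∨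
    ∃ b'' b', SilentStar trans tau b b'' ∧ trans b'' l b' ∧ R a b'' ∧ R a' b'

def SemiBisim (a b : S) : Prop := ∃ R, Semi trans tau R ∧ R a b

variable {trans tau}

lemma semi_of_br {R : S → S → Prop} (h : IsBranchingBisim trans tau R) :
    Semi trans tau R := by
  refine ⟨h.1, fun a b a' l hab ht => ?_⟩
  rcases h.2 a b a' l hab ht with ⟨hl, h'⟩ | h'
  · exact Or.inl ⟨hl, b, Relation.ReflTransGen.refl, hab, h'⟩
  · exact Or.inr h'

lemma silent_lift {R : S → S → Prop} (hR : Semi trans tau R) {b c b₁ : S} (hbc : R b c)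
    (hs : SilentStar trans tau b b₁) : ∃ c₁, SilentStar trans tau c c₁ ∧ R b₁ c₁ := by
  induction hs with
  | refl => exact ⟨c, Relation.ReflTransGen.refl, hbc⟩
  | tail _ h2 ih =>
    obtain ⟨c', hcc', hR'⟩ := ih
    rcases hR.2 _ _ _ _ hR' h2 with ⟨_, c₁, hs1, _, hb1⟩ | ⟨c'', c₁, hs1, ht1, _, hb1⟩
    · exact ⟨c₁, hcc'.trans hs1, hb1⟩
    · exact ⟨c₁, hcc'.trans (hs1.tail ht1), hb1⟩

lemma comp_transfer {R1 R2 : S → S → Prop} (h1 : Semi trans tau R1) (h2 : Semi trans tau R2)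
    {a b c a' : S} {l : A} (hab : R1 a b) (hbc : R2 b c) (ht : trans a l a') :
    (l = tau ∧ ∃ c', SilentStar trans tau c c' ∧ (∃ d, R1 a d ∧ R2 d c') ∧
        (∃ d, R1 a' d ∧ R2 d c')) ∨
    ∃ c'' c', SilentStar trans tau c c'' ∧ trans c'' l c' ∧ (∃ d, R1 a d ∧ R2 d c'') ∧
        (∃ d, R1 a' d ∧ R2 d c') := by
  rcases h1.2 a b a' l hab ht with ⟨hl, b', hsb, haB', ha'B'⟩ |
      ⟨b'', b', hsb, htb, haB'', ha'B'⟩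
  · obtain ⟨c', hsc, hb'c'⟩ := silent_lift h2 hbc hsb
    exact Or.inl ⟨hl, c', hsc, ⟨b', haB', hb'c'⟩, ⟨b', ha'B', hb'c'⟩⟩
  · obtain ⟨c₀, hsc0, hb''c0⟩ := silent_lift h2 hbc hsb
    rcases h2.2 _ _ _ _ hb''c0 htb with ⟨hl, c₁, hsc1, hb''c1, hb'c1⟩ |
        ⟨c'', c', hs, ht', hb''c'', hb'c'⟩
    · exact Or.inl ⟨hl, c₁, hsc0.trans hsc1, ⟨b'', haB'', hb''c1⟩, ⟨b', ha'B', hb'c1⟩⟩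
    · exact Or.inr ⟨c'', c', hsc0.trans hs, ht', ⟨b'', haB'', hb''c''⟩, ⟨b', ha'B', hb'c'⟩⟩

lemma semi_comp {R1 R2 : S → S → Prop} (h1 : Semi trans tau R1) (h2 : Semi trans tau R2) :
    Semi trans tau (fun a c => (∃ b, R1 a b ∧ R2 b c) ∨ (∃ b, R2 a b ∧ R1 b c)) := by
  constructor
  · rintro a c (⟨b, hab, hbc⟩ | ⟨b, hab, hbc⟩)
    · exact Or.inr ⟨b, h2.1 hbc, h1.1 hab⟩
    · exact Or.inl ⟨b, h1.1 hbc, h2.1 hab⟩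
  · rintro a c a' l (⟨b, hab, hbc⟩ | ⟨b, hab, hbc⟩) ht
    · rcases comp_transfer h1 h2 hab hbc ht with ⟨hl, c', hs, hA, hA'⟩ |
          ⟨c'', c', hs, ht', hA, hA'⟩
      · exact Or.inl ⟨hl, c', hs, Or.inl hA, Or.inl hA'⟩
      · exact Or.inr ⟨c'', c', hs, ht', Or.inl hA, Or.inl hA'⟩
    · rcases comp_transfer h2 h1 hab hbc ht with ⟨hl, c', hs, hA, hA'⟩ |
          ⟨c'', c', hs, ht', hA, hA'⟩
      · exact Or.inl ⟨hl, c', hs, Or.inr hA, Or.inr hA'⟩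
      · exact Or.inr ⟨c'', c', hs, ht', Or.inr hA, Or.inr hA'⟩

lemma semi_eq : Semi trans tau (Eq : S → S → Prop) := by
  refine ⟨fun _ _ h => h.symm, fun a b a' l hab ht => ?_⟩
  subst hab
  exact Or.inr ⟨a, a', Relation.ReflTransGen.refl, ht, rfl, rfl⟩

lemma semiBisim_refl (a : S) : SemiBisim trans tau a a := ⟨Eq, semi_eq, rfl⟩

lemma semiBisim_symm {a b : S} (h : SemiBisim trans tau a b) : SemiBisim trans tau b a := by
  obtain ⟨R, hR, hab⟩ := h; exact ⟨R, hR, hR.1 hab⟩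

lemma semiBisim_trans {a b c : S} (h1 : SemiBisim trans tau a b)
    (h2 : SemiBisim trans tau b c) : SemiBisim trans tau a c := by
  obtain ⟨R1, hR1, hab⟩ := h1
  obtain ⟨R2, hR2, hbc⟩ := h2
  exact ⟨_, semi_comp hR1 hR2, Or.inl ⟨b, hab, hbc⟩⟩

lemma semi_semiBisim : Semi trans tau (SemiBisim trans tau) := by
  refine ⟨fun _ _ => semiBisim_symm, ?_⟩
  rintro a b a' l ⟨R, hR, hab⟩ ht
  rcases hR.2 a b a' l hab ht with ⟨hl, b', hs, hab', ha'b'⟩ |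
      ⟨b'', b', hs, ht', hab'', ha'b'⟩
  · exact Or.inl ⟨hl, b', hs, ⟨R, hR, hab'⟩, ⟨R, hR, ha'b'⟩⟩
  · exact Or.inr ⟨b'', b', hs, ht', ⟨R, hR, hab''⟩, ⟨R, hR, ha'b'⟩⟩

lemma isBranching_semiBisim : IsBranchingBisim trans tau (SemiBisim trans tau) := by
  refine ⟨fun _ _ => semiBisim_symm, fun a b a' l hab ht => ?_⟩
  rcases semi_semiBisim.2 a b a' l hab ht with ⟨hl, b', hs, hab', ha'b'⟩ | h'
  · -- a' ≃ b' ≃ a ≃ b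
    exact Or.inl ⟨hl, semiBisim_trans (semiBisim_trans ha'b' (semiBisim_symm hab')) hab⟩
  · exact Or.inr h'

lemma brBisim_iff_semiBisim {a b : S} :
    BrBisim trans tau a b ↔ SemiBisim trans tau a b := by
  constructor
  · rintro ⟨R, hR, hab⟩; exact ⟨R, semi_of_br hR, hab⟩
  · intro h; exact ⟨_, isBranching_semiBisim, h⟩

lemma brBisim_refl (a : S) : BrBisim trans tau a a :=
  brBisim_iff_semiBisim.2 (semiBisim_refl a)

lemma brBisim_symm {a b : S} (h : BrBisim trans tau a b) : BrBisim trans tau b a :=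
  brBisim_iff_semiBisim.2 (semiBisim_symm (brBisim_iff_semiBisim.1 h))

lemma brBisim_trans {a b c : S} (h1 : BrBisim trans tau a b) (h2 : BrBisim trans tau b c) :
    BrBisim trans tau a c :=
  brBisim_iff_semiBisim.2
    (semiBisim_trans (brBisim_iff_semiBisim.1 h1) (brBisim_iff_semiBisim.1 h2))

end AuxEquiv

section AuxBPA

variable {V A : Type*} {rules : V → A → List V → Prop} {tau : A}

lemma bpa_trans_append {p q : List V} {l : A} (γ : List V)
    (h : BPA.Trans rules p l q) : BPA.Trans rules (p ++ γ) l (q ++ γ) := by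
  obtain ⟨X, α0, β0, hp, hr, hq⟩ := h
  exact ⟨X, α0, β0 ++ γ, by simp [hp], hr, by simp [hq, List.append_assoc]⟩

lemma bpa_reach_append {p q : List V} (γ : List V)
    (h : BPA.Reach rules p q) : BPA.Reach rules (p ++ γ) (q ++ γ) := by
  induction h with
  | refl => exact Relation.ReflTransGen.refl
  | tail _ h2 ih =>
    obtain ⟨l, ht⟩ := h2
    exact ih.tail ⟨l, bpa_trans_append γ ht⟩

lemma bpa_reach_nil (hn : BPA.Normed rules) (α : List V) : BPA.Reach rules α [] := by
  induction α with
  | nil => exact Relation.ReflTransGen.refl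
  | cons X γ ih =>
    have h1 : BPA.Reach rules (X :: γ) γ := by
      have := bpa_reach_append (rules := rules) γ (hn X)
      simpa using this
    exact h1.trans ih

lemma no_trans_nil {l : A} {q : List V} : ¬ BPA.Trans rules [] l q := by
  rintro ⟨X, α0, β0, hp, _, _⟩
  simp at hp

lemma silentStar_nil {q : List V} (h : SilentStar (BPA.Trans rules) tau [] q) : q = [] := by
  induction h with
  | refl => rfl
  | tail _ h2 ih => rw [ih] at h2; exact absurd h2 no_trans_nil

/-- If `q ≃ ε` then `q` can silently reach `ε`. -/
lemma silent_to_nil (hn : BPA.Normed rules) {q : List V}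
    (h : BrBisim (BPA.Trans rules) tau q []) : SilentStar (BPA.Trans rules) tau q [] := by
  have hr : BPA.Reach rules q [] := bpa_reach_nil hn q
  induction hr using Relation.ReflTransGen.head_induction_on with
  | refl => exact Relation.ReflTransGen.refl
  | head h1 _ ih =>
    rename_i p p' _
    obtain ⟨l, ht⟩ := h1
    obtain ⟨R, hR, hpq⟩ := h
    rcases hR.2 p [] p' l hpq ht with ⟨hl, hR'⟩ | ⟨b'', b', hs, ht', _, _⟩
    · subst hl
      exact Relation.ReflTransGen.head ht (ih ⟨R, hR, hR'⟩)
    · rw [silentStar_nil hs] at ht'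
      exact absurd ht' no_trans_nil

/-- Transfer of `Cost` sequences to `ε` along branching bisimilarity. -/
lemma cost_transfer (hn : BPA.Normed rules) {p q : List V} {k : ℕ}
    (hc : Cost (BPA.Trans rules) tau p [] k)
    (hb : BrBisim (BPA.Trans rules) tau q p) : Cost (BPA.Trans rules) tau q [] k := by
  generalize he : ([] : List V) = e at hc ⊢
  induction hc generalizing q with
  | zero h =>
    subst he
    obtain ⟨_, hpe⟩ := h
    have hqe : BrBisim (BPA.Trans rules) tau q [] := brBisim_trans hb hpe
    exact Cost.zero ⟨silent_to_nil hn hqe, hqe⟩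
  | step hsb hj _ ih =>
    subst he
    rename_i p p' p'' _ _
    obtain ⟨_, hpp'⟩ := hsb
    have hqp' : BrBisim (BPA.Trans rules) tau q p' := brBisim_trans hb hpp'
    obtain ⟨R, hR, hqp'R⟩ := hqp'
    have hp'q : R p' q := hR.1 hqp'R
    rcases hj with ⟨a, hane, hta⟩ | ⟨htt, hnb⟩
    · rcases hR.2 p' q p'' a hp'q hta with ⟨hl, _⟩ | ⟨g1, g2, hs, ht', hpg1, hp''g2⟩
      · exact absurd hl hane
      · have hqg1 : BrBisim (BPA.Trans rules) tau q g1 :=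
          brBisim_trans (⟨R, hR, hqp'R⟩) ⟨R, hR, hpg1⟩
        exact Cost.step ⟨hs, hqg1⟩ (Or.inl ⟨a, hane, ht'⟩)
          (ih (brBisim_symm ⟨R, hR, hp''g2⟩) rfl)
    · rcases hR.2 p' q p'' tau hp'q htt with ⟨_, hR'⟩ | ⟨g1, g2, hs, ht', hpg1, hp''g2⟩
      · exact absurd (brBisim_trans ⟨R, hR, hp'q⟩ (brBisim_symm ⟨R, hR, hR'⟩)) hnb
      · have hqg1 : BrBisim (BPA.Trans rules) tau q g1 :=
          brBisim_trans (⟨R, hR, hqp'R⟩) ⟨R, hR, hpg1⟩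
        have hng : ¬ BrBisim (BPA.Trans rules) tau g1 g2 := by
          intro hg
          exact hnb (brBisim_trans (brBisim_trans ⟨R, hR, hpg1⟩ hg)
            (brBisim_symm ⟨R, hR, hp''g2⟩))
        exact Cost.step ⟨hs, hqg1⟩ (Or.inr ⟨ht', hng⟩)
          (ih (brBisim_symm ⟨R, hR, hp''g2⟩) rfl)

end AuxBPA

/-- Branching bisimilar processes of a normed BPA system have equal branching
norm. -/
theorem bnorm_eq_of_brBisim {V A : Type*} (rules : V → A → List V → Prop) (tau : A)
    (hn : BPA.Normed rules) (α β : List V)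
    (h : BrBisim (BPA.Trans rules) tau α β) :
    BPA.bnorm rules tau α = BPA.bnorm rules tau β := by
  have hset : {k | Cost (BPA.Trans rules) tau (α ++ []) [] k} =
      {k | Cost (BPA.Trans rules) tau (β ++ []) [] k} := by
    ext k
    simp only [Set.mem_setOf_eq, List.append_nil]
    exact ⟨fun hc => cost_transfer hn hc (brBisim_symm h),
      fun hc => cost_transfer hn hc h⟩
  simp only [BPA.bnorm, BPA.bnormRel, hset]
end

section
/- (Fu's decomposition lemma) In a normed BPA system, for a process X₁X₂…X_kα: (i) X₁X₂…X_kα ≃ α if and only if X_iα ≃ α for all 1 ≤ i ≤ k; (ii) X₁X₂…X_kα ≈ α if and only if X_iα ≈ α for all 1 ≤ i ≤ k. -/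
/-! Both `≃` and `≈` are equivalences, congruences for prefixing `γ ++ ·`, and have the
stuttering property: a process on a silent path between two equivalent processes is equivalent to
them. Right to left then follows from congruence and transitivity. For left to right, let `m` be
the least number of visible actions with which `α` can reach `ε` (normedness makes it exist).
Since `Xs ++ α ≈ α`, also `Xs ++ α` reaches `ε` with at most `m` visible actions, and splitting
such a run at `α` shows that `Xs` reaches `ε` silently. Writing `Xs = β ++ Y :: γ`, stuttering
along `Xs ++ α ⇒ Y :: γ ++ α ⇒ γ ++ α ⇒ α` gives `Y :: γ ++ α ≃ α` and `γ ++ α ≃ α`, whence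
`Y :: α ≃ Y :: γ ++ α ≃ α`. -/

section Bisimilarity

variable {S A : Type*} {tr : S → A → S → Prop} {tau : A} {a b c : S}

theorem BrBisim.symm (h : BrBisim tr tau a b) : BrBisim tr tau b a :=
  let ⟨R, hR, hab⟩ := h
  ⟨R, hR, hR.1 hab⟩

theorem BrBisim.refl (a : S) : BrBisim tr tau a a :=
  ⟨Eq, ⟨fun _ _ h => h.symm, by
    rintro a _ a' l rfl ht
    exact Or.inr ⟨a, a', .refl, ht, rfl, rfl⟩⟩, rfl⟩

theorem isBranchingBisim_brBisim : IsBranchingBisim tr tau (BrBisim tr tau) := by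
  refine ⟨fun _ _ h => h.symm, ?_⟩
  rintro a b a' l ⟨R, hR, hab⟩ ht
  rcases hR.2 a b a' l hab ht with ⟨hl, h⟩ | ⟨b'', b', hs, ht', h1, h2⟩
  · exact Or.inl ⟨hl, R, hR, h⟩
  · exact Or.inr ⟨b'', b', hs, ht', ⟨R, hR, h1⟩, ⟨R, hR, h2⟩⟩

/-- Branching bisimulation with a silent step allowed to be matched by a silent path: it yields
the same bisimilarity, and transitivity is easy for it. -/
def IsSemiBranchingBisim (tr : S → A → S → Prop) (tau : A) (R : S → S → Prop) : Prop :=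
  (∀ ⦃a b⦄, R a b → R b a) ∧
  ∀ a b a' (l : A), R a b → tr a l a' →
    (l = tau ∧ ∃ b', SilentStar tr tau b b' ∧ R a b' ∧ R a' b') ∨
    ∃ b'' b', SilentStar tr tau b b'' ∧ tr b'' l b' ∧ R a b'' ∧ R a' b'

def SemiBrBisim (tr : S → A → S → Prop) (tau : A) (a b : S) : Prop :=
  ∃ R, IsSemiBranchingBisim tr tau R ∧ R a b

theorem IsBranchingBisim.isSemiBranchingBisim {R : S → S → Prop}
    (hR : IsBranchingBisim tr tau R) : IsSemiBranchingBisim tr tau R := by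
  refine ⟨hR.1, fun a b a' l hab ht => ?_⟩
  rcases hR.2 a b a' l hab ht with ⟨hl, h⟩ | h
  · exact Or.inl ⟨hl, b, .refl, hab, h⟩
  · exact Or.inr h

theorem IsSemiBranchingBisim.exists_silentStar {R : S → S → Prop}
    (hR : IsSemiBranchingBisim tr tau R) {a' : S} (hab : R a b) (hs : SilentStar tr tau a a') :
    ∃ b', SilentStar tr tau b b' ∧ R a' b' := by
  induction hs using Relation.ReflTransGen.head_induction_on generalizing b with
  | refl => exact ⟨b, .refl, hab⟩
  | head ht _ ih =>
    rcases hR.2 _ _ _ _ hab ht with ⟨-, b₁, hs₁, -, h⟩ | ⟨b'', b₁, hs₁, ht₁, -, h⟩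
    · obtain ⟨b', hs', h'⟩ := ih h
      exact ⟨b', hs₁.trans hs', h'⟩
    · obtain ⟨b', hs', h'⟩ := ih h
      exact ⟨b', (hs₁.tail ht₁).trans hs', h'⟩

theorem SemiBrBisim.symm (h : SemiBrBisim tr tau a b) : SemiBrBisim tr tau b a :=
  let ⟨R, hR, hab⟩ := h
  ⟨R, hR, hR.1 hab⟩

theorem isSemiBranchingBisim_semiBrBisim : IsSemiBranchingBisim tr tau (SemiBrBisim tr tau) := by
  refine ⟨fun _ _ h => h.symm, ?_⟩
  rintro a b a' l ⟨R, hR, hab⟩ ht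
  rcases hR.2 a b a' l hab ht with ⟨hl, b', hs, h1, h2⟩ | ⟨b'', b', hs, ht', h1, h2⟩
  · exact Or.inl ⟨hl, b', hs, ⟨R, hR, h1⟩, ⟨R, hR, h2⟩⟩
  · exact Or.inr ⟨b'', b', hs, ht', ⟨R, hR, h1⟩, ⟨R, hR, h2⟩⟩

theorem SemiBrBisim.trans (hab : SemiBrBisim tr tau a b) (hbc : SemiBrBisim tr tau b c) :
    SemiBrBisim tr tau a c := by
  have hS := isSemiBranchingBisim_semiBrBisim (tr := tr) (tau := tau)
  refine ⟨fun x z => ∃ y, SemiBrBisim tr tau x y ∧ SemiBrBisim tr tau y z,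
    ⟨fun x z ⟨y, hxy, hyz⟩ => ⟨y, hyz.symm, hxy.symm⟩, ?_⟩, b, hab, hbc⟩
  rintro x z x' l ⟨y, hxy, hyz⟩ ht
  rcases hS.2 _ _ _ _ hxy ht with ⟨hl, y₁, hs, h1, h2⟩ | ⟨y'', y', hs, ht', h1, h2⟩
  · obtain ⟨z₁, hzs, hz⟩ := hS.exists_silentStar hyz hs
    exact Or.inl ⟨hl, z₁, hzs, ⟨y₁, h1, hz⟩, ⟨y₁, h2, hz⟩⟩
  · obtain ⟨z₁, hzs, hz⟩ := hS.exists_silentStar hyz hs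
    rcases hS.2 _ _ _ _ hz ht' with ⟨hl, z₂, hzs', h3, h4⟩ | ⟨z'', z', hzs', ht'', h3, h4⟩
    · exact Or.inl ⟨hl, z₂, hzs.trans hzs', ⟨y'', h1, h3⟩, ⟨y', h2, h4⟩⟩
    · exact Or.inr ⟨z'', z', hzs.trans hzs', ht'', ⟨y'', h1, h3⟩, ⟨y', h2, h4⟩⟩

theorem isBranchingBisim_semiBrBisim : IsBranchingBisim tr tau (SemiBrBisim tr tau) := by
  refine ⟨fun _ _ h => h.symm, fun a b a' l hab ht => ?_⟩
  rcases isSemiBranchingBisim_semiBrBisim.2 a b a' l hab ht with ⟨hl, b', -, h1, h2⟩ | h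
  · exact Or.inl ⟨hl, h2.trans (h1.symm.trans hab)⟩
  · exact Or.inr h

theorem brBisim_iff_semiBrBisim : BrBisim tr tau a b ↔ SemiBrBisim tr tau a b :=
  ⟨fun ⟨R, hR, hab⟩ => ⟨R, hR.isSemiBranchingBisim, hab⟩,
    fun h => ⟨_, isBranchingBisim_semiBrBisim, h⟩⟩

theorem BrBisim.trans (hab : BrBisim tr tau a b) (hbc : BrBisim tr tau b c) :
    BrBisim tr tau a c :=
  brBisim_iff_semiBrBisim.2
    ((brBisim_iff_semiBrBisim.1 hab).trans (brBisim_iff_semiBrBisim.1 hbc))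

theorem BrBisim.of_silentStar_of_silentStar (hab : SilentStar tr tau a b)
    (hbc : SilentStar tr tau b c) (hac : BrBisim tr tau a c) : BrBisim tr tau b a := by
  have hB := isBranchingBisim_brBisim (tr := tr) (tau := tau)
  refine brBisim_iff_semiBrBisim.2 ⟨fun u v => BrBisim tr tau u v ∨ (u = b ∧ v = a) ∨
    (u = a ∧ v = b), ⟨?_, ?_⟩, Or.inr (Or.inl ⟨rfl, rfl⟩)⟩
  · rintro u v (h | ⟨rfl, rfl⟩ | ⟨rfl, rfl⟩)
    · exact Or.inl h.symm
    · exact Or.inr (Or.inr ⟨rfl, rfl⟩)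
    · exact Or.inr (Or.inl ⟨rfl, rfl⟩)
  · rintro u v u' l (h | ⟨rfl, rfl⟩ | ⟨rfl, rfl⟩) ht
    · rcases hB.2 _ _ _ _ h ht with ⟨hl, h'⟩ | ⟨v'', v', hs, ht', h1, h2⟩
      · exact Or.inl ⟨hl, v, .refl, Or.inl h, Or.inl h'⟩
      · exact Or.inr ⟨v'', v', hs, ht', Or.inl h1, Or.inl h2⟩
    · exact Or.inr ⟨u, u', hab, ht, Or.inl (.refl u), Or.inl (.refl u')⟩
    · rcases hB.2 _ _ _ _ hac ht with ⟨hl, h'⟩ | ⟨c'', c', hs, ht', h1, h2⟩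
      · exact Or.inl ⟨hl, c, hbc, Or.inl hac, Or.inl h'⟩
      · exact Or.inr ⟨c'', c', hbc.trans hs, ht', Or.inl h1, Or.inl h2⟩

theorem IsBranchingBisim.isWeakBisim {R : S → S → Prop} (hR : IsBranchingBisim tr tau R) :
    IsWeakBisim tr tau R := by
  refine ⟨hR.1, fun a b a' l hab ht => ?_⟩
  rcases hR.2 a b a' l hab ht with h | ⟨b'', b', hs, ht', -, h⟩
  · exact Or.inl h
  · exact Or.inr ⟨b'', b', b', hs, ht', .refl, h⟩

theorem BrBisim.wkBisim (h : BrBisim tr tau a b) : WkBisim tr tau a b :=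
  let ⟨R, hR, hab⟩ := h
  ⟨R, hR.isWeakBisim, hab⟩

theorem WkBisim.symm (h : WkBisim tr tau a b) : WkBisim tr tau b a :=
  let ⟨R, hR, hab⟩ := h
  ⟨R, hR, hR.1 hab⟩

theorem WkBisim.refl (a : S) : WkBisim tr tau a a :=
  (BrBisim.refl a).wkBisim

theorem WkBisim.transfer {a' : S} {l : A} (h : WkBisim tr tau a b) (ht : tr a l a') :
    (l = tau ∧ WkBisim tr tau a' b) ∨
    ∃ g₁ g₂ b', SilentStar tr tau b g₁ ∧ tr g₁ l g₂ ∧ SilentStar tr tau g₂ b' ∧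
      WkBisim tr tau a' b' := by
  obtain ⟨R, hR, hab⟩ := h
  rcases hR.2 _ _ _ _ hab ht with ⟨hl, h⟩ | ⟨g₁, g₂, b', hs, ht', hs', h⟩
  · exact Or.inl ⟨hl, R, hR, h⟩
  · exact Or.inr ⟨g₁, g₂, b', hs, ht', hs', R, hR, h⟩

theorem WkBisim.exists_silentStar {a' : S} (hab : WkBisim tr tau a b)
    (hs : SilentStar tr tau a a') : ∃ b', SilentStar tr tau b b' ∧ WkBisim tr tau a' b' := by
  induction hs using Relation.ReflTransGen.head_induction_on generalizing b with
  | refl => exact ⟨b, .refl, hab⟩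
  | head ht _ ih =>
    rcases hab.transfer ht with ⟨-, h⟩ | ⟨g₁, g₂, b₁, hs₁, ht₁, hs₂, h⟩
    · exact ih h
    · obtain ⟨b', hs', h'⟩ := ih h
      exact ⟨b', ((hs₁.tail ht₁).trans hs₂).trans hs', h'⟩

theorem WkBisim.trans (hab : WkBisim tr tau a b) (hbc : WkBisim tr tau b c) :
    WkBisim tr tau a c := by
  refine ⟨fun x z => ∃ y, WkBisim tr tau x y ∧ WkBisim tr tau y z,
    ⟨fun x z ⟨y, hxy, hyz⟩ => ⟨y, hyz.symm, hxy.symm⟩, ?_⟩, b, hab, hbc⟩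
  rintro x z x' l ⟨y, hxy, hyz⟩ ht
  rcases hxy.transfer ht with ⟨hl, h⟩ | ⟨g₁, g₂, y', hs₁, ht₁, hs₂, h⟩
  · exact Or.inl ⟨hl, y, h, hyz⟩
  obtain ⟨z₁, hzs₁, hz₁⟩ := hyz.exists_silentStar hs₁
  rcases hz₁.transfer ht₁ with ⟨hl, hz₂⟩ | ⟨k₁, k₂, z₂, hks₁, hkt, hks₂, hz₂⟩
  · obtain ⟨z', hzs', hz'⟩ := hz₂.exists_silentStar hs₂
    rcases (hzs₁.trans hzs').cases_head with rfl | ⟨d, hd, hds⟩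
    · exact Or.inl ⟨hl, y', h, hz'⟩
    · exact Or.inr ⟨z, d, z', .refl, hl ▸ hd, hds, y', h, hz'⟩
  · obtain ⟨z', hzs', hz'⟩ := hz₂.exists_silentStar hs₂
    exact Or.inr ⟨k₁, k₂, z', hzs₁.trans hks₁, hkt, hks₂.trans hzs', y', h, hz'⟩

theorem WkBisim.of_silentStar_of_silentStar (hab : SilentStar tr tau a b)
    (hbc : SilentStar tr tau b c) (hac : WkBisim tr tau a c) : WkBisim tr tau b a := by
  refine ⟨fun u v => WkBisim tr tau u v ∨ (u = b ∧ v = a) ∨ (u = a ∧ v = b), ⟨?_, ?_⟩,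
    Or.inr (Or.inl ⟨rfl, rfl⟩)⟩
  · rintro u v (h | ⟨rfl, rfl⟩ | ⟨rfl, rfl⟩)
    · exact Or.inl h.symm
    · exact Or.inr (Or.inr ⟨rfl, rfl⟩)
    · exact Or.inr (Or.inl ⟨rfl, rfl⟩)
  · rintro u v u' l (h | ⟨rfl, rfl⟩ | ⟨rfl, rfl⟩) ht
    · rcases h.transfer ht with ⟨hl, h'⟩ | ⟨g₁, g₂, v', hs, ht', hs', h'⟩
      · exact Or.inl ⟨hl, Or.inl h'⟩
      · exact Or.inr ⟨g₁, g₂, v', hs, ht', hs', Or.inl h'⟩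
    · exact Or.inr ⟨u, u', u', hab, ht, .refl, Or.inl (.refl u')⟩
    · rcases hac.transfer ht with ⟨hl, h'⟩ | ⟨g₁, g₂, c', hs, ht', hs', h'⟩
      · rcases hbc.cases_head with rfl | ⟨d, hd, hds⟩
        · exact Or.inl ⟨hl, Or.inl h'⟩
        · exact Or.inr ⟨v, d, c, .refl, hl ▸ hd, hds, Or.inl h'⟩
      · exact Or.inr ⟨g₁, g₂, c', hbc.trans hs, ht', hs', Or.inl h'⟩

end Bisimilarity

namespace BPA

variable {V A : Type*} {rules : V → A → List V → Prop} {tau : A}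

theorem not_trans_nil {l : A} {q : List V} : ¬ Trans rules [] l q := by
  rintro ⟨X, γ, β, h, -, -⟩
  cases h

theorem Trans.append_right {p q : List V} {l : A} (h : Trans rules p l q) (r : List V) :
    Trans rules (p ++ r) l (q ++ r) := by
  obtain ⟨X, γ, β, rfl, hX, rfl⟩ := h
  exact ⟨X, γ, β ++ r, rfl, hX, List.append_assoc γ β r⟩

theorem trans_append_cases {δ m p' : List V} {l : A} (h : Trans rules (δ ++ m) l p') :
    δ = [] ∨ ∃ δ', p' = δ' ++ m ∧ Trans rules δ l δ' := by
  obtain ⟨X, γ, β, heq, hX, rfl⟩ := h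
  cases δ with
  | nil => exact Or.inl rfl
  | cons Y δ =>
    obtain ⟨rfl, rfl⟩ := List.cons_eq_cons.mp heq
    exact Or.inr ⟨γ ++ δ, (List.append_assoc γ δ m).symm, Y, γ, δ, rfl, hX, rfl⟩

theorem silentStar_append_right {p q : List V} (h : SilentStar (Trans rules) tau p q)
    (r : List V) : SilentStar (Trans rules) tau (p ++ r) (q ++ r) :=
  Relation.ReflTransGen.lift (· ++ r) (fun _ _ ht => ht.append_right r) _ _ h

theorem eq_nil_of_silentStar_nil {q : List V} (h : SilentStar (Trans rules) tau [] q) :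
    q = [] := by
  rcases h.cases_head with rfl | ⟨_, ht, -⟩
  · rfl
  · exact absurd ht not_trans_nil

theorem tau_of_wkBisim_nil {p p' : List V} {l : A} (h : WkBisim (Trans rules) tau p [])
    (ht : Trans rules p l p') : l = tau ∧ WkBisim (Trans rules) tau p' [] := by
  rcases h.transfer ht with h' | ⟨g₁, g₂, -, hs, ht', -⟩
  · exact h'
  · rw [eq_nil_of_silentStar_nil hs] at ht'
    exact absurd ht' not_trans_nil

theorem brBisim_append_left (γ : List V) {β β' : List V}
    (h : BrBisim (Trans rules) tau β β') : BrBisim (Trans rules) tau (γ ++ β) (γ ++ β') := by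
  refine ⟨fun p q => ∃ δ m m', p = δ ++ m ∧ q = δ ++ m' ∧ BrBisim (Trans rules) tau m m',
    ⟨?_, ?_⟩, γ, β, β', rfl, rfl, h⟩
  · rintro p q ⟨δ, m, m', rfl, rfl, hm⟩
    exact ⟨δ, m', m, rfl, rfl, hm.symm⟩
  · rintro p q p' l ⟨δ, m, m', rfl, rfl, hm⟩ ht
    rcases trans_append_cases ht with rfl | ⟨δ', rfl, hδ⟩
    · rcases isBranchingBisim_brBisim.2 _ _ _ _ hm ht with ⟨hl, h'⟩ | ⟨b'', b', hs, ht', h1, h2⟩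
      · exact Or.inl ⟨hl, [], p', m', rfl, rfl, h'⟩
      · exact Or.inr ⟨b'', b', hs, ht', ⟨[], m, b'', rfl, rfl, h1⟩, ⟨[], p', b', rfl, rfl, h2⟩⟩
    · exact Or.inr ⟨δ ++ m', δ' ++ m', .refl, hδ.append_right m', ⟨δ, m, m', rfl, rfl, hm⟩,
        ⟨δ', m, m', rfl, rfl, hm⟩⟩

theorem wkBisim_append_left (γ : List V) {β β' : List V}
    (h : WkBisim (Trans rules) tau β β') : WkBisim (Trans rules) tau (γ ++ β) (γ ++ β') := by
  refine ⟨fun p q => ∃ δ m m', p = δ ++ m ∧ q = δ ++ m' ∧ WkBisim (Trans rules) tau m m',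
    ⟨?_, ?_⟩, γ, β, β', rfl, rfl, h⟩
  · rintro p q ⟨δ, m, m', rfl, rfl, hm⟩
    exact ⟨δ, m', m, rfl, rfl, hm.symm⟩
  · rintro p q p' l ⟨δ, m, m', rfl, rfl, hm⟩ ht
    rcases trans_append_cases ht with rfl | ⟨δ', rfl, hδ⟩
    · rcases hm.transfer ht with ⟨hl, h'⟩ | ⟨g₁, g₂, b', hs, ht', hs', h'⟩
      · exact Or.inl ⟨hl, [], p', m', rfl, rfl, h'⟩
      · exact Or.inr ⟨g₁, g₂, b', hs, ht', hs', [], p', b', rfl, rfl, h'⟩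
    · exact Or.inr ⟨δ ++ m', δ' ++ m', δ' ++ m', .refl, hδ.append_right m', .refl,
        δ', m, m', rfl, rfl, hm⟩

/-- `TerminatesWithin rules tau p n`: `p` can reach `ε` performing at most `n` visible actions.
The least such `n` is the weak norm of `p`. -/
inductive TerminatesWithin (rules : V → A → List V → Prop) (tau : A) : List V → ℕ → Prop
  | nil (n : ℕ) : TerminatesWithin rules tau [] n
  | silent {p p' : List V} {n : ℕ} :
      Trans rules p tau p' → TerminatesWithin rules tau p' n → TerminatesWithin rules tau p n
  | step {p p' : List V} {n : ℕ} (l : A) :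
      Trans rules p l p' → TerminatesWithin rules tau p' n → TerminatesWithin rules tau p (n + 1)

namespace TerminatesWithin

theorem mono {p : List V} {n m : ℕ} (h : TerminatesWithin rules tau p n) (hnm : n ≤ m) :
    TerminatesWithin rules tau p m := by
  induction h generalizing m with
  | nil => exact .nil m
  | silent ht _ ih => exact .silent ht (ih hnm)
  | step l ht _ ih =>
    obtain ⟨m, rfl⟩ := Nat.exists_eq_add_of_lt hnm
    exact .step l ht (ih (by omega))

theorem append {p q : List V} {n m : ℕ} (hp : TerminatesWithin rules tau p n)
    (hq : TerminatesWithin rules tau q m) : TerminatesWithin rules tau (p ++ q) (n + m) := by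
  induction hp with
  | nil n => exact hq.mono (Nat.le_add_left m n)
  | silent ht _ ih => exact .silent (ht.append_right q) ih
  | step l ht _ ih => exact Nat.add_right_comm .. ▸ .step l (ht.append_right q) ih

theorem exists_add_of_append {p q : List V} {n : ℕ}
    (h : TerminatesWithin rules tau (p ++ q) n) :
    ∃ n₁ n₂, n₁ + n₂ = n ∧ TerminatesWithin rules tau p n₁ ∧ TerminatesWithin rules tau q n₂ := by
  generalize hpq : p ++ q = r at h
  induction h generalizing p with
  | nil n =>
    obtain ⟨rfl, rfl⟩ := List.append_eq_nil_iff.mp hpq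
    exact ⟨0, n, by omega, .nil 0, .nil n⟩
  | @silent r r' n ht hr ih =>
    subst hpq
    rcases trans_append_cases ht with rfl | ⟨p', rfl, hp⟩
    · exact ⟨0, n, by omega, .nil 0, .silent ht hr⟩
    · obtain ⟨n₁, n₂, hn, h₁, h₂⟩ := ih rfl
      exact ⟨n₁, n₂, hn, .silent hp h₁, h₂⟩
  | @step r r' n l ht hr ih =>
    subst hpq
    rcases trans_append_cases ht with rfl | ⟨p', rfl, hp⟩
    · exact ⟨0, n + 1, by omega, .nil 0, .step l ht hr⟩
    · obtain ⟨n₁, n₂, hn, h₁, h₂⟩ := ih rfl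
      exact ⟨n₁ + 1, n₂, by omega, .step l hp h₁, h₂⟩

theorem of_silentStar {p p' : List V} {n : ℕ} (hs : SilentStar (Trans rules) tau p p')
    (h : TerminatesWithin rules tau p' n) : TerminatesWithin rules tau p n := by
  induction hs using Relation.ReflTransGen.head_induction_on with
  | refl => exact h
  | head ht _ ih => exact .silent ht ih

theorem zero_iff {p : List V} :
    TerminatesWithin rules tau p 0 ↔ SilentStar (Trans rules) tau p [] := by
  refine ⟨fun h => ?_, fun h => of_silentStar h (.nil 0)⟩
  generalize hn : 0 = n at h
  induction h with
  | nil => exact .refl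
  | silent ht _ ih => exact .head ht (ih hn)
  | step => omega

theorem exists_of_reach {p : List V} (h : Reach rules p []) :
    ∃ n, TerminatesWithin rules tau p n := by
  induction h using Relation.ReflTransGen.head_induction_on with
  | refl => exact ⟨0, .nil 0⟩
  | head hs _ ih =>
    obtain ⟨l, ht⟩ := hs
    obtain ⟨n, hn⟩ := ih
    exact ⟨n + 1, .step l ht hn⟩

theorem exists_of_normed (hn : Normed rules) (p : List V) :
    ∃ n, TerminatesWithin rules tau p n := by
  induction p with
  | nil => exact ⟨0, .nil 0⟩
  | cons X p ih =>
    obtain ⟨k, hk⟩ := exists_of_reach (tau := tau) (hn X)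
    obtain ⟨m, hm⟩ := ih
    exact ⟨k + m, hk.append hm⟩

theorem zero_of_wkBisim_nil (hn : Normed rules) {p : List V}
    (h : WkBisim (Trans rules) tau p []) : TerminatesWithin rules tau p 0 := by
  obtain ⟨m, hm⟩ := exists_of_normed (tau := tau) hn p
  induction hm with
  | nil => exact .nil 0
  | silent ht _ ih => exact .silent ht (ih (tau_of_wkBisim_nil h ht).2)
  | step l ht _ ih =>
    obtain ⟨rfl, h'⟩ := tau_of_wkBisim_nil h ht
    exact .silent ht (ih h')

theorem of_wkBisim (hn : Normed rules) {p q : List V} {n : ℕ}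
    (h : WkBisim (Trans rules) tau p q) (hq : TerminatesWithin rules tau q n) :
    TerminatesWithin rules tau p n := by
  induction hq generalizing p with
  | nil n => exact (zero_of_wkBisim_nil hn h).mono (Nat.zero_le n)
  | silent ht _ ih =>
    rcases h.symm.transfer ht with ⟨-, h'⟩ | ⟨g₁, g₂, p', hs, ht', hs', h'⟩
    · exact ih h'.symm
    · exact of_silentStar hs (.silent ht' (of_silentStar hs' (ih h'.symm)))
  | step l ht _ ih =>
    rcases h.symm.transfer ht with ⟨-, h'⟩ | ⟨g₁, g₂, p', hs, ht', hs', h'⟩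
    · exact (ih h'.symm).mono (Nat.le_succ _)
    · exact of_silentStar hs (.step l ht' (of_silentStar hs' (ih h'.symm)))

end TerminatesWithin

open TerminatesWithin in
theorem silentStar_nil_of_append {p q : List V}
    (h : SilentStar (Trans rules) tau (p ++ q) []) :
    SilentStar (Trans rules) tau p [] ∧ SilentStar (Trans rules) tau q [] := by
  obtain ⟨n₁, n₂, hn, hp, hq⟩ := (zero_iff.2 h).exists_add_of_append
  exact ⟨zero_iff.1 (hp.mono (by omega)), zero_iff.1 (hq.mono (by omega))⟩

open TerminatesWithin in
theorem silentStar_nil_of_wkBisim_append (hn : Normed rules) {p α : List V}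
    (h : WkBisim (Trans rules) tau (p ++ α) α) : SilentStar (Trans rules) tau p [] := by
  classical
  have hα := exists_of_normed (tau := tau) hn α
  obtain ⟨n₁, n₂, hsum, hp, hα'⟩ := (of_wkBisim hn h (Nat.find_spec hα)).exists_add_of_append
  have hmin : Nat.find hα ≤ n₂ := Nat.find_min' hα hα'
  exact zero_iff.1 (hp.mono (by omega))

theorem rel_append_iff_forall_mem {E : List V → List V → Prop} (hE : Equivalence E)
    (append_left : ∀ γ {β β'}, E β β' → E (γ ++ β) (γ ++ β'))
    (stutter : ∀ {p q r}, SilentStar (Trans rules) tau p q → SilentStar (Trans rules) tau q r →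
      E p r → E q p)
    (α : List V) (silent : ∀ {p}, E (p ++ α) α → SilentStar (Trans rules) tau p [])
    (Xs : List V) : E (Xs ++ α) α ↔ ∀ X ∈ Xs, E (X :: α) α := by
  refine ⟨fun h Y hY => ?_, fun h => ?_⟩
  · obtain ⟨β, γ, rfl⟩ := List.append_of_mem hY
    obtain ⟨hβ, hYγ⟩ := silentStar_nil_of_append (silent h)
    obtain ⟨hY, hγ⟩ := silentStar_nil_of_append (p := [Y]) hYγ
    have s₁ : SilentStar (Trans rules) tau (β ++ Y :: γ ++ α) (Y :: γ ++ α) := by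
      simpa using silentStar_append_right hβ (Y :: γ ++ α)
    have s₂ : SilentStar (Trans rules) tau (Y :: γ ++ α) (γ ++ α) :=
      silentStar_append_right hY (γ ++ α)
    have s₃ : SilentStar (Trans rules) tau (γ ++ α) α := silentStar_append_right hγ α
    have hγα : E (γ ++ α) α := hE.trans (stutter (s₁.trans s₂) s₃ h) h
    have hYγα : E (Y :: γ ++ α) α := hE.trans (stutter s₁ (s₂.trans s₃) h) h
    exact hE.trans (hE.symm (append_left [Y] hγα)) hYγα
  · induction Xs with
    | nil => exact hE.refl α
    | cons X Xs ih =>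
      have hXs := ih fun Y hY => h Y (List.mem_cons_of_mem X hY)
      exact hE.trans (append_left [X] hXs) (h X List.mem_cons_self)

end BPA

/-- Fu's decomposition lemma: X₁…X_kα ≃ α iff X_iα ≃ α for every i, and the
same for weak bisimilarity. -/
theorem fu_decomposition {V A : Type*} (rules : V → A → List V → Prop) (tau : A)
    (hn : BPA.Normed rules) (Xs : List V) (α : List V) :
    (BrBisim (BPA.Trans rules) tau (Xs ++ α) α ↔
      ∀ X ∈ Xs, BrBisim (BPA.Trans rules) tau (X :: α) α) ∧
    (WkBisim (BPA.Trans rules) tau (Xs ++ α) α ↔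
      ∀ X ∈ Xs, WkBisim (BPA.Trans rules) tau (X :: α) α) :=
  ⟨BPA.rel_append_iff_forall_mem ⟨BrBisim.refl, BrBisim.symm, BrBisim.trans⟩
      BPA.brBisim_append_left BrBisim.of_silentStar_of_silentStar α
      (fun h => BPA.silentStar_nil_of_wkBisim_append hn h.wkBisim) Xs,
    BPA.rel_append_iff_forall_mem ⟨WkBisim.refl, WkBisim.symm, WkBisim.trans⟩
      BPA.wkBisim_append_left WkBisim.of_silentStar_of_silentStar α
      (BPA.silentStar_nil_of_wkBisim_append hn) Xs⟩
end
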